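/- arXiv:2005.07770 — 2 statements merged into one kernel-verified Lean document; each statement's English description precedes it below -/
import Mathlib

section
/- Let (Ω, 𝔉, ℙ) be a probability space, 𝒢 ⊆ 𝔉 a sub-σ-algebra, I ⊆ ℝ a nonempty interval, f : ℝ → ℝ continuous and strictly increasing on I, and X an I-valued random variable with E[f(X)²] < ∞. Then there exists an I-valued, 𝒢-measurable random variable X*, unique up to ℙ-null sets, minimizing Y ↦ E[(f(X) − f(Y))²] over all 𝒢-measurable I-valued Y with E[f(Y)²] < ∞; moreover X* = f⁻¹(E[f(X) | 𝒢]) ℙ-almost surely. -/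
open MeasureTheory Set Function

private lemma mul_int_aux {Ω : Type*} {mΩ : MeasurableSpace Ω} {μ : Measure Ω} {a b : Ω → ℝ}
    (ha : MemLp a 2 μ) (hb : MemLp b 2 μ) : Integrable (fun ω => a ω * b ω) μ := by
  have h : MemLp (a • b) 1 μ := hb.smul ha (r := 1) (hpqr := ⟨by
    rw [inv_one]
    exact ENNReal.inv_two_add_inv_two⟩)
  exact memLp_one_iff_integrable.mp h

private lemma pos_part_null {Ω : Type*} {mΩ : MeasurableSpace Ω} {μ : Measure Ω}
    {φ : Ω → ℝ} {A : Set Ω} (hA : MeasurableSet A) (hφ : Integrable φ μ)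
    (hpos : ∀ ω ∈ A, 0 < φ ω) (hint : ∫ ω in A, φ ω ∂μ = 0) : μ A = 0 := by
  have hind : Integrable (A.indicator φ) μ := hφ.indicator hA
  have hnn : 0 ≤ᵐ[μ] A.indicator φ := Filter.Eventually.of_forall fun ω => by
    by_cases h : ω ∈ A
    · simp [indicator_of_mem h, (hpos ω h).le]
    · simp [indicator_of_notMem h]
  have hzero : ∫ ω, A.indicator φ ω ∂μ = 0 := by
    rw [integral_indicator hA]; exact hint
  have hae : A.indicator φ =ᵐ[μ] 0 :=
    (integral_eq_zero_iff_of_nonneg_ae hnn hind).mp hzero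
  have hsub : A ⊆ {ω | A.indicator φ ω ≠ 0} := fun ω hω => by
    simp only [mem_setOf_eq, indicator_of_mem hω]
    exact (hpos ω hω).ne'
  exact measure_mono_null hsub (by simpa [Filter.EventuallyEq, ae_iff] using hae)

/-- Best predictor given a sub-σ-algebra: there exists an `I`-valued, `𝒢`-measurable
random variable `X*`, unique up to `ℙ`-null sets, minimizing `Y ↦ E[(f(X) - f(Y))²]`
over all `𝒢`-measurable `I`-valued `Y` with `E[f(Y)²] < ∞`; moreover
`f(X*) = E[f(X) | 𝒢]` a.s., i.e. `X* = f⁻¹(E[f(X) | 𝒢])` a.s. -/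
theorem exists_unique_f_conditional_best_predictor
    {Ω : Type*} (m : MeasurableSpace Ω) {mΩ : MeasurableSpace Ω} (μ : Measure Ω) [IsProbabilityMeasure μ]
    (hm : m ≤ mΩ)
    (I : Set ℝ) (hI : I.OrdConnected) (hIne : I.Nonempty)
    (f : ℝ → ℝ) (hfc : ContinuousOn f I) (hfm : StrictMonoOn f I)
    (X : Ω → ℝ) (hXm : Measurable X) (hXI : ∀ ω, X ω ∈ I)
    (hL2 : MemLp (fun ω => f (X ω)) 2 μ) :
    ∃ Xstar : Ω → ℝ,
      Measurable[m] Xstar ∧ (∀ ω, Xstar ω ∈ I) ∧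
      MemLp (fun ω => f (Xstar ω)) 2 μ ∧
      (∀ Y : Ω → ℝ, Measurable[m] Y → (∀ ω, Y ω ∈ I) →
          MemLp (fun ω => f (Y ω)) 2 μ →
          ∫ ω, (f (X ω) - f (Xstar ω)) ^ 2 ∂μ ≤ ∫ ω, (f (X ω) - f (Y ω)) ^ 2 ∂μ) ∧
      (∀ Y : Ω → ℝ, Measurable[m] Y → (∀ ω, Y ω ∈ I) →
          MemLp (fun ω => f (Y ω)) 2 μ →
          ∫ ω, (f (X ω) - f (Y ω)) ^ 2 ∂μ = ∫ ω, (f (X ω) - f (Xstar ω)) ^ 2 ∂μ →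
          Y =ᵐ[μ] Xstar) ∧
      (fun ω => f (Xstar ω)) =ᵐ[μ] μ[fun ω => f (X ω)|m] := by
  haveI : SigmaFinite (μ.trim hm) := inferInstance
  set F : Ω → ℝ := fun ω => f (X ω) with hFdef
  have hFint : Integrable F μ := hL2.integrable one_le_two
  set g : Ω → ℝ := μ[F|m] with hgdef
  have hgsm : StronglyMeasurable[m] g := stronglyMeasurable_condExp
  have hgm : Measurable[m] g := hgsm.measurable
  have hgint : Integrable g μ := integrable_condExp
  -- the image interval
  set J : Set ℝ := f '' I with hJdef
  have hJo : J.OrdConnected := by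
    constructor
    rintro y1 ⟨x1, hx1, rfl⟩ y2 ⟨x2, hx2, rfl⟩ y hy
    rcases le_total x1 x2 with h | h
    · have hsub : Icc x1 x2 ⊆ I := hI.out hx1 hx2
      obtain ⟨x, hx, hfx⟩ := intermediate_value_Icc h (hfc.mono hsub) hy
      exact ⟨x, hsub hx, hfx⟩
    · have hsub : Icc x2 x1 ⊆ I := hI.out hx2 hx1
      obtain ⟨x, hx, hfx⟩ := intermediate_value_Icc' h (hfc.mono hsub) hy
      exact ⟨x, hsub hx, hfx⟩
  have hFJ : ∀ ω, F ω ∈ J := fun ω => ⟨X ω, hXI ω, rfl⟩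
  -- g lands in J almost surely
  have hmemJ : ∀ᵐ ω ∂μ, g ω ∈ J := by
    set L : Set ℝ := {y | ∀ z ∈ J, y < z} with hLdef
    set U : Set ℝ := {y | ∀ z ∈ J, z < y} with hUdef
    have hLo : L.OrdConnected := ⟨fun y1 _ y2 h2 y hy z hz => lt_of_le_of_lt hy.2 (h2 z hz)⟩
    have hUo : U.OrdConnected := ⟨fun y1 h1 y2 _ y hy z hz => lt_of_lt_of_le (h1 z hz) hy.1⟩
    have hAm : MeasurableSet[m] (g ⁻¹' L) := hgm hLo.measurableSet
    have hBm : MeasurableSet[m] (g ⁻¹' U) := hgm hUo.measurableSet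
    have hA0 : μ (g ⁻¹' L) = 0 := by
      have hi : ∫ ω in g ⁻¹' L, (F ω - g ω) ∂μ = 0 := by
        have h1 : Integrable F (μ.restrict (g ⁻¹' L)) := hFint.restrict
        have h2 : Integrable g (μ.restrict (g ⁻¹' L)) := hgint.restrict
        rw [integral_sub h1 h2, setIntegral_condExp hm hFint hAm, sub_self]
      exact pos_part_null (φ := fun ω => F ω - g ω) (hm _ hAm) (hFint.sub hgint)
        (fun ω hω => sub_pos.mpr (hω (F ω) (hFJ ω))) hi
    have hB0 : μ (g ⁻¹' U) = 0 := by
      have hi : ∫ ω in g ⁻¹' U, (g ω - F ω) ∂μ = 0 := by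
        have h1 : Integrable F (μ.restrict (g ⁻¹' U)) := hFint.restrict
        have h2 : Integrable g (μ.restrict (g ⁻¹' U)) := hgint.restrict
        rw [integral_sub h2 h1, setIntegral_condExp hm hFint hBm, sub_self]
      exact pos_part_null (φ := fun ω => g ω - F ω) (hm _ hBm) (hgint.sub hFint)
        (fun ω hω => sub_pos.mpr (hω (F ω) (hFJ ω))) hi
    have hsub : {ω | g ω ∉ J} ⊆ g ⁻¹' L ∪ g ⁻¹' U := by
      intro ω hω
      simp only [mem_setOf_eq] at hω
      by_contra h
      simp only [mem_union, mem_preimage, hLdef, hUdef, mem_setOf_eq, not_or] at h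
      push_neg at h
      obtain ⟨⟨z1, hz1, hz1'⟩, ⟨z2, hz2, hz2'⟩⟩ := h
      exact hω (hJo.out hz1 hz2 ⟨hz1', hz2'⟩)
    rw [ae_iff]
    exact measure_mono_null hsub (measure_union_null hA0 hB0)
  -- construct Xstar
  obtain ⟨x₀, hx₀⟩ := hIne
  classical
  set g' : Ω → ℝ := fun ω => if g ω ∈ J then g ω else f x₀ with hg'def
  have hg'm : Measurable[m] g' := Measurable.ite (hgm hJo.measurableSet) hgm measurable_const
  have hg'J : ∀ ω, g' ω ∈ J := by
    intro ω; by_cases h : g ω ∈ J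
    · simpa [hg'def, h] using h
    · simp only [hg'def, if_neg h]; exact mem_image_of_mem f hx₀
  have hg'ae : g' =ᵐ[μ] g := by
    filter_upwards [hmemJ] with ω h
    simp [hg'def, h]
  set φ : ℝ → ℝ := invFunOn f I with hφdef
  have hφspec : ∀ y ∈ J, φ y ∈ I ∧ f (φ y) = y := by
    rintro y ⟨x, hx, rfl⟩
    exact ⟨invFunOn_mem ⟨x, hx, rfl⟩, invFunOn_eq ⟨x, hx, rfl⟩⟩
  have hφmono : MonotoneOn φ J := by
    intro y1 h1 y2 h2 h12
    by_contra hlt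
    push_neg at hlt
    have := hfm (hφspec _ h2).1 (hφspec _ h1).1 hlt
    rw [(hφspec _ h1).2, (hφspec _ h2).2] at this
    exact absurd h12 (not_le.mpr this)
  set Xstar : Ω → ℝ := fun ω => φ (g' ω) with hXsdef
  have hXsI : ∀ ω, Xstar ω ∈ I := fun ω => (hφspec _ (hg'J ω)).1
  have hfXs : ∀ ω, f (Xstar ω) = g' ω := fun ω => (hφspec _ (hg'J ω)).2
  have hGeq : (fun ω => f (Xstar ω)) = g' := funext hfXs
  have hGae : (fun ω => f (Xstar ω)) =ᵐ[μ] g := hGeq ▸ hg'ae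
  -- measurability of Xstar
  have hXsm : Measurable[m] Xstar := by
    apply measurable_of_Ioi
    intro a
    have hset : Xstar ⁻¹' Ioi a = g' ⁻¹' {y ∈ J | a < φ y} := by
      ext ω
      simp only [mem_preimage, mem_Ioi, mem_setOf_eq, hXsdef]
      exact ⟨fun h => ⟨hg'J ω, h⟩, fun h => h.2⟩
    rw [hset]
    refine hg'm ?_
    refine OrdConnected.measurableSet ⟨fun y1 h1 y2 h2 y hy => ?_⟩
    have hyJ : y ∈ J := hJo.out h1.1 h2.1 hy
    exact ⟨hyJ, lt_of_lt_of_le h1.2 (hφmono h1.1 hyJ hy.1)⟩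
  -- f ∘ Y is m-measurable for I-valued m-measurable Y
  have hcomp : ∀ Y : Ω → ℝ, Measurable[m] Y → (∀ ω, Y ω ∈ I) →
      Measurable[m] (fun ω => f (Y ω)) := by
    intro Y hYm hYI
    apply measurable_of_Ioi
    intro a
    have hset : (fun ω => f (Y ω)) ⁻¹' Ioi a = Y ⁻¹' {x ∈ I | a < f x} := by
      ext ω
      simp only [mem_preimage, mem_Ioi, mem_setOf_eq]
      exact ⟨fun h => ⟨hYI ω, h⟩, fun h => h.2⟩
    rw [hset]
    refine hYm ?_
    refine OrdConnected.measurableSet ⟨fun x1 h1 x2 h2 x hx => ?_⟩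
    have hxI : x ∈ I := hI.out h1.1 h2.1 hx
    exact ⟨hxI, lt_of_lt_of_le h1.2 (hfm.monotoneOn h1.1 hxI hx.1)⟩
  -- g is in L2 via condexpL2
  have hgL2 : MemLp g 2 μ := by
    set Flp : Lp ℝ 2 μ := hL2.toLp F with hFlpdef
    have hG2 : ((condExpL2 ℝ ℝ hm Flp : Lp ℝ 2 μ) : Ω → ℝ) =ᵐ[μ] g := by
      refine ae_eq_condExp_of_forall_setIntegral_eq hm hFint
        (fun s _ hμs => integrableOn_condExpL2_of_measure_ne_top hm hμs.ne Flp)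
        (fun s hs hμs => ?_) (aestronglyMeasurable_condExpL2 hm Flp)
      rw [integral_condExpL2_eq hm Flp hs hμs.ne]
      exact integral_congr_ae (ae_restrict_of_ae hL2.coeFn_toLp)
    exact (Lp.memLp _).ae_eq hG2
  have hGL2 : MemLp (fun ω => f (Xstar ω)) 2 μ := hgL2.ae_eq hGae.symm
  -- orthogonality and the key Pythagoras identity
  have key : ∀ Y : Ω → ℝ, Measurable[m] Y → (∀ ω, Y ω ∈ I) →
      MemLp (fun ω => f (Y ω)) 2 μ →
      ∫ ω, (F ω - f (Y ω)) ^ 2 ∂μ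
        = ∫ ω, (F ω - f (Xstar ω)) ^ 2 ∂μ + ∫ ω, (f (Xstar ω) - f (Y ω)) ^ 2 ∂μ := by
    intro Y hYm hYI hYL2
    set H : Ω → ℝ := fun ω => f (Y ω) with hHdef
    set G : Ω → ℝ := fun ω => f (Xstar ω) with hGdef
    set Z : Ω → ℝ := fun ω => G ω - H ω with hZdef
    have hZm : StronglyMeasurable[m] Z :=
      ((hGeq ▸ hg'm : Measurable[m] G).sub (hcomp Y hYm hYI)).stronglyMeasurable
    have hZL2 : MemLp Z 2 μ := hGL2.sub hYL2
    have hZF : Integrable (fun ω => Z ω * F ω) μ := mul_int_aux hZL2 hL2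
    have hZg : Integrable (fun ω => Z ω * g ω) μ := mul_int_aux hZL2 hgL2
    have horth : ∫ ω, Z ω * (F ω - G ω) ∂μ = 0 := by
      have hpull := condExp_mul_of_stronglyMeasurable_left (μ := μ) hZm
        (by exact hZF) hFint
      have h3 : ∫ ω, Z ω * F ω ∂μ = ∫ ω, Z ω * g ω ∂μ := by
        rw [← integral_condExp (μ := μ) hm (f := fun ω => Z ω * F ω)]
        exact integral_congr_ae hpull
      have h4 : ∫ ω, Z ω * (F ω - G ω) ∂μ = ∫ ω, Z ω * (F ω - g ω) ∂μ := by
        refine integral_congr_ae ?_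
        filter_upwards [hGae] with ω h
        have hGg : G ω = g ω := h
        rw [hGg]
      rw [h4]
      have h5 : ∫ ω, Z ω * (F ω - g ω) ∂μ
          = ∫ ω, Z ω * F ω ∂μ - ∫ ω, Z ω * g ω ∂μ := by
        simp_rw [mul_sub]
        exact integral_sub hZF hZg
      rw [h5, h3, sub_self]
    have hsq1 : Integrable (fun ω => (F ω - G ω) ^ 2) μ := (hL2.sub hGL2).integrable_sq
    have hsq2 : Integrable (fun ω => (G ω - H ω) ^ 2) μ := (hGL2.sub hYL2).integrable_sq
    have hcross : Integrable (fun ω => 2 * (Z ω * (F ω - G ω))) μ :=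
      (mul_int_aux hZL2 (hL2.sub hGL2)).const_mul 2
    have hexp : ∀ ω, (F ω - H ω) ^ 2
        = (F ω - G ω) ^ 2 + (2 * (Z ω * (F ω - G ω)) + (G ω - H ω) ^ 2) := by
      intro ω; simp only [hZdef]; ring
    calc ∫ ω, (F ω - H ω) ^ 2 ∂μ
        = ∫ ω, ((F ω - G ω) ^ 2 + (2 * (Z ω * (F ω - G ω)) + (G ω - H ω) ^ 2)) ∂μ := by
          exact integral_congr_ae (Filter.Eventually.of_forall hexp)
      _ = ∫ ω, (F ω - G ω) ^ 2 ∂μ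
            + ∫ ω, (2 * (Z ω * (F ω - G ω)) + (G ω - H ω) ^ 2) ∂μ := by
          exact integral_add hsq1 (hcross.add hsq2)
      _ = ∫ ω, (F ω - G ω) ^ 2 ∂μ + ∫ ω, (G ω - H ω) ^ 2 ∂μ := by
          rw [integral_add hcross hsq2, integral_const_mul, horth, mul_zero, zero_add]
  refine ⟨Xstar, hXsm, hXsI, hGL2, ?_, ?_, hGae⟩
  · intro Y hYm hYI hYL2
    rw [key Y hYm hYI hYL2]
    have : 0 ≤ ∫ ω, (f (Xstar ω) - f (Y ω)) ^ 2 ∂μ :=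
      integral_nonneg fun ω => sq_nonneg _
    linarith
  · intro Y hYm hYI hYL2 heq
    have h0 : ∫ ω, (f (Xstar ω) - f (Y ω)) ^ 2 ∂μ = 0 := by
      have := key Y hYm hYI hYL2
      rw [heq] at this
      linarith
    have hsq2 : Integrable (fun ω => (f (Xstar ω) - f (Y ω)) ^ 2) μ :=
      (hGL2.sub hYL2).integrable_sq
    have hae0 : (fun ω => (f (Xstar ω) - f (Y ω)) ^ 2) =ᵐ[μ] 0 :=
      (integral_eq_zero_iff_of_nonneg (fun ω => sq_nonneg _) hsq2).mp h0
    filter_upwards [hae0] with ω h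
    have hfeq : f (Xstar ω) = f (Y ω) := by
      have := sq_eq_zero_iff.mp h
      linarith
    exact (hfm.injOn (hYI ω) (hXsI ω) hfeq.symm)
end

section
/- Let (Ω, 𝔉, ℙ) be a probability space, 𝒢₁ ⊆ 𝒢₂ ⊆ 𝔉 sub-σ-algebras, I ⊆ ℝ a nonempty interval, u : ℝ → ℝ continuous and strictly increasing on I, and X, Y two I-valued random variables with u(X) and u(Y) integrable. If E_u[X | 𝒢₂] ≤ E_u[Y | 𝒢₂] ℙ-almost surely, then E_u[X | 𝒢₁] ≤ E_u[Y | 𝒢₁] ℙ-almost surely. In other words, conditional preference based on finer information implies the same preference based on coarser information. -/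
open MeasureTheory

/-- Consistency of conditional preference: if the decision maker prefers `Y` to `X`
given the finer information `𝒢₂` (i.e. `E_u[X|𝒢₂] ≤ E_u[Y|𝒢₂]` a.s.), then the same
preference holds given the coarser information `𝒢₁ ⊆ 𝒢₂`. Here `ZiX, ZiY` are (versions
of) the `u`-conditional expectations `E_u[X|𝒢ᵢ] = u⁻¹(E[u(X)|𝒢ᵢ])`, etc. -/
theorem conditional_preference_consistent
    {Ω : Type*} {mΩ : MeasurableSpace Ω} (μ : Measure Ω) [IsProbabilityMeasure μ]
    (m1 m2 : MeasurableSpace Ω) (h12 : m1 ≤ m2) (h2 : m2 ≤ mΩ)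
    (I : Set ℝ) (hI : I.OrdConnected) (hIne : I.Nonempty)
    (u : ℝ → ℝ) (huc : ContinuousOn u I) (hum : StrictMonoOn u I)
    (X Y : Ω → ℝ) (hXI : ∀ ω, X ω ∈ I) (hYI : ∀ ω, Y ω ∈ I)
    (hintX : Integrable (fun ω => u (X ω)) μ)
    (hintY : Integrable (fun ω => u (Y ω)) μ)
    (Z2X : Ω → ℝ) (hZ2XI : ∀ ω, Z2X ω ∈ I)
    (hZ2X : (fun ω => u (Z2X ω)) =ᵐ[μ] μ[fun ω => u (X ω)|m2])
    (Z2Y : Ω → ℝ) (hZ2YI : ∀ ω, Z2Y ω ∈ I)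
    (hZ2Y : (fun ω => u (Z2Y ω)) =ᵐ[μ] μ[fun ω => u (Y ω)|m2])
    (Z1X : Ω → ℝ) (hZ1XI : ∀ ω, Z1X ω ∈ I)
    (hZ1X : (fun ω => u (Z1X ω)) =ᵐ[μ] μ[fun ω => u (X ω)|m1])
    (Z1Y : Ω → ℝ) (hZ1YI : ∀ ω, Z1Y ω ∈ I)
    (hZ1Y : (fun ω => u (Z1Y ω)) =ᵐ[μ] μ[fun ω => u (Y ω)|m1])
    (hpref : ∀ᵐ ω ∂μ, Z2X ω ≤ Z2Y ω) :
    ∀ᵐ ω ∂μ, Z1X ω ≤ Z1Y ω := by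
  -- From hpref, u(Z2X) ≤ u(Z2Y) a.e.
  have h2le : (μ[fun ω => u (X ω)|m2]) ≤ᵐ[μ] μ[fun ω => u (Y ω)|m2] := by
    filter_upwards [hpref, hZ2X, hZ2Y] with ω hle hX2 hY2
    rw [← hX2, ← hY2]
    exact hum.monotoneOn (hZ2XI ω) (hZ2YI ω) hle
  have h1le : (μ[fun ω => u (X ω)|m1]) ≤ᵐ[μ] μ[fun ω => u (Y ω)|m1] := by
    have hX1 := condExp_condExp_of_le (μ := μ) (f := fun ω => u (X ω)) h12 h2
    have hY1 := condExp_condExp_of_le (μ := μ) (f := fun ω => u (Y ω)) h12 h2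
    have hmono : (μ[μ[fun ω => u (X ω)|m2]|m1]) ≤ᵐ[μ] μ[μ[fun ω => u (Y ω)|m2]|m1] :=
      condExp_mono integrable_condExp integrable_condExp h2le
    filter_upwards [hX1, hY1, hmono] with ω hx hy hm
    rw [← hx, ← hy]; exact hm
  filter_upwards [h1le, hZ1X, hZ1Y] with ω hle hX1 hY1
  have : u (Z1X ω) ≤ u (Z1Y ω) := by rw [hX1, hY1]; exact hle
  exact (hum.le_iff_le (hZ1XI ω) (hZ1YI ω)).mp this
end
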